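/- arXiv:2508.11420 — 7 statements merged into one kernel-verified Lean document; each statement's English description precedes it below -/
import Mathlib

section
/- Let X be a separable reflexive Banach space with property (m_p) for some p > 1, and let T be a bounded linear operator on X. Define α(T) as the infimum of ‖x‖ over all weak cluster points x of maximizing sequences for T. If α(T) < 1, then α(T) = 0. -/
open Filter Topology

/-- Weak convergence of a sequence in a normed space. -/
def WeakTendsto {X : Type*} [NormedAddCommGroup X] [NormedSpace ℝ X]
    (x : ℕ → X) (x₀ : X) : Prop :=
  ∀ f : X →L[ℝ] ℝ, Tendsto (fun n => f (x n)) atTop (𝓝 (f x₀))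

/-- Property (m_p). -/
def PropertyMp {X : Type*} [NormedAddCommGroup X] [NormedSpace ℝ X] (p : ℝ) : Prop :=
  ∀ x : ℕ → X, WeakTendsto x 0 → ∀ y : X,
    limsup (fun n => ‖x n + y‖ ^ p) atTop = limsup (fun n => ‖x n‖ ^ p) atTop + ‖y‖ ^ p

/-- A maximizing sequence for a bounded operator: unit vectors with ‖T xₙ‖ → ‖T‖. -/
def MaximizingSeq {X : Type*} [NormedAddCommGroup X] [NormedSpace ℝ X]
    (T : X →L[ℝ] X) (x : ℕ → X) : Prop :=
  (∀ n, ‖x n‖ = 1) ∧ Tendsto (fun n => ‖T (x n)‖) atTop (𝓝 ‖T‖)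

/-- Weak cluster point of some maximizing sequence for T. -/
def WeakClusterPtOfMaximizing {X : Type*} [NormedAddCommGroup X] [NormedSpace ℝ X]
    (T : X →L[ℝ] X) (x₀ : X) : Prop :=
  ∃ x : ℕ → X, MaximizingSeq T x ∧ ∃ φ : ℕ → ℕ, StrictMono φ ∧ WeakTendsto (x ∘ φ) x₀

/-- The essential norm: distance to the compact operators. -/
noncomputable def essNorm {X : Type*} [NormedAddCommGroup X] [NormedSpace ℝ X]
    (T : X →L[ℝ] X) : ℝ :=
  sInf {c : ℝ | ∃ K : X →L[ℝ] X, IsCompactOperator K ∧ c = ‖T - K‖}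

/-- Minimal weak maximizing limit. -/
noncomputable def alphaT {X : Type*} [NormedAddCommGroup X] [NormedSpace ℝ X]
    (T : X →L[ℝ] X) : ℝ :=
  sInf {r : ℝ | ∃ x₀ : X, WeakClusterPtOfMaximizing T x₀ ∧ r = ‖x₀‖}

/-!
Let `x₀` be a weak cluster point, with `‖x₀‖ < 1`, of a maximizing sequence `yₙ`, and put
`zₙ = yₙ - x₀`, a weakly null sequence. Property `(m_p)`, applied to `zₙ` and to `T zₙ`, gives
`limsup ‖zₙ‖^p = 1 - ‖x₀‖^p > 0` and
`limsup ‖T zₙ‖^p = ‖T‖^p - ‖T x₀‖^p ≥ ‖T‖^p (1 - ‖x₀‖^p)`.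
Since `‖T zₙ‖ ≤ ‖T‖ ‖zₙ‖`, along a suitable subsequence `‖zₙ‖ → b > 0` and `‖T zₙ‖ → ‖T‖ b`,
so the normalized vectors `zₙ / ‖zₙ‖` form a weakly null maximizing sequence. Hence `0` is a
weak cluster point of a maximizing sequence and `α(T) = 0`.
-/

section WeakTendsto

variable {X Y : Type*} [NormedAddCommGroup X] [NormedSpace ℝ X]
  [NormedAddCommGroup Y] [NormedSpace ℝ Y] {x : ℕ → X} {x₀ : X}

lemma WeakTendsto.comp_tendsto (hx : WeakTendsto x x₀) {ψ : ℕ → ℕ}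
    (hψ : Tendsto ψ atTop atTop) : WeakTendsto (x ∘ ψ) x₀ :=
  fun f => (hx f).comp hψ

lemma WeakTendsto.sub_const (hx : WeakTendsto x x₀) : WeakTendsto (fun n => x n - x₀) 0 := by
  intro f
  simpa using (hx f).sub_const (f x₀)

lemma WeakTendsto.map (hx : WeakTendsto x x₀) (T : X →L[ℝ] Y) :
    WeakTendsto (fun n => T (x n)) (T x₀) :=
  fun f => hx (f.comp T)

lemma WeakTendsto.smul_of_tendsto (hx : WeakTendsto x 0) {c : ℕ → ℝ} {c₀ : ℝ}
    (hc : Tendsto c atTop (𝓝 c₀)) : WeakTendsto (fun n => c n • x n) 0 := by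
  intro f
  simpa using hc.mul (hx f)

end WeakTendsto

lemma PropertyMp.limsup_norm_sub_rpow {X : Type*} [NormedAddCommGroup X] [NormedSpace ℝ X]
    {p : ℝ} (hmp : PropertyMp (X := X) p) {x : ℕ → X} {x₀ : X} (hx : WeakTendsto x x₀) :
    limsup (fun n => ‖x n - x₀‖ ^ p) atTop = limsup (fun n => ‖x n‖ ^ p) atTop - ‖x₀‖ ^ p := by
  have h := hmp _ hx.sub_const x₀
  simp only [sub_add_cancel] at h
  linarith

lemma ContinuousLinearMap.norm_apply_rpow_le {E F : Type*} [NormedAddCommGroup E]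
    [NormedSpace ℝ E] [NormedAddCommGroup F] [NormedSpace ℝ F] (T : E →L[ℝ] F) (v : E)
    {p : ℝ} (hp : 0 ≤ p) : ‖T v‖ ^ p ≤ ‖T‖ ^ p * ‖v‖ ^ p := by
  rw [← Real.mul_rpow (norm_nonneg _) (norm_nonneg _)]
  exact Real.rpow_le_rpow (norm_nonneg _) (T.le_opNorm v) hp

lemma tendsto_rpow_inv_of_tendsto_rpow {α : Type*} {l : Filter α} {f : α → ℝ} {p c : ℝ}
    (hp : 0 < p) (hf : ∀ a, 0 ≤ f a) (h : Tendsto (fun a => f a ^ p) l (𝓝 c)) :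
    Tendsto f l (𝓝 (c ^ p⁻¹)) := by
  have h' := (Real.continuousAt_rpow_const c p⁻¹ (Or.inr (inv_nonneg.2 hp.le))).tendsto.comp h
  simpa only [Function.comp_def, Real.rpow_rpow_inv (hf _) hp.ne'] using h'

lemma exists_seq_tendsto_limsup_of_le_mul {s t : ℕ → ℝ} {M : ℝ} (hM : 0 ≤ M)
    (hs : ∀ n, 0 ≤ s n) (ht : ∀ n, 0 ≤ t n) (hts : ∀ n, t n ≤ M * s n)
    (hs_bdd : BddAbove (Set.range s)) (hlim : M * limsup s atTop ≤ limsup t atTop) :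
    ∃ ψ : ℕ → ℕ, Tendsto ψ atTop atTop ∧ Tendsto (s ∘ ψ) atTop (𝓝 (limsup s atTop)) ∧
      Tendsto (t ∘ ψ) atTop (𝓝 (M * limsup s atTop)) := by
  have hs_le : IsBoundedUnder (· ≤ ·) atTop s := hs_bdd.isBoundedUnder_of_range
  rcases hM.eq_or_lt with rfl | hM
  · have ht0 : ∀ n, t n = 0 := fun n => le_antisymm (by simpa using hts n) (ht n)
    obtain ⟨ψ, hsψ, hψ⟩ := exists_seq_tendsto_limsup (u := s) (f := atTop)
      (isBoundedUnder_of ⟨0, hs⟩).isCoboundedUnder_le hs_le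
    exact ⟨ψ, hψ, hsψ, by simp [Function.comp_def, ht0]⟩
  obtain ⟨C, hC⟩ := hs_bdd
  obtain ⟨ψ, htψ, hψ⟩ := exists_seq_tendsto_limsup (u := t) (f := atTop)
    (isBoundedUnder_of ⟨0, ht⟩).isCoboundedUnder_le
    (isBoundedUnder_of ⟨M * C, fun n => (hts n).trans
      (mul_le_mul_of_nonneg_left (hC ⟨n, rfl⟩) hM.le)⟩)
  have hsψ : Tendsto (s ∘ ψ) atTop (𝓝 (limsup s atTop)) := by
    refine tendsto_order.2 ⟨fun a ha => ?_, fun a ha => hψ.eventually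
      (eventually_lt_of_limsup_lt ha hs_le)⟩
    -- a lower bound on `t (ψ k)` forces one on `s (ψ k)`
    have hMa : M * a < limsup t atTop := (mul_lt_mul_of_pos_left ha hM).trans_le hlim
    filter_upwards [htψ.eventually (lt_mem_nhds hMa)] with k hk
    exact lt_of_mul_lt_mul_left (hk.trans_le (hts (ψ k))) hM.le
  have htlim : limsup t atTop = M * limsup s atTop :=
    le_antisymm (le_of_tendsto_of_tendsto' htψ (hsψ.const_mul M) fun k => hts (ψ k)) hlim
  exact ⟨ψ, hψ, hsψ, htlim ▸ htψ⟩

lemma weakClusterPtOfMaximizing_zero_of_tendsto {X : Type*} [NormedAddCommGroup X]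
    [NormedSpace ℝ X] {T : X →L[ℝ] X} {z : ℕ → X} {b : ℝ} (hz : WeakTendsto z 0) (hb : 0 < b)
    (hzb : Tendsto (fun n => ‖z n‖) atTop (𝓝 b))
    (hTz : Tendsto (fun n => ‖T (z n)‖) atTop (𝓝 (‖T‖ * b))) :
    WeakClusterPtOfMaximizing T 0 := by
  obtain ⟨N, hN⟩ := eventually_atTop.1 (hzb.eventually (lt_mem_nhds hb))
  have hshift : Tendsto (· + N) atTop atTop := tendsto_add_atTop_nat N
  have hne : ∀ k, ‖z (k + N)‖ ≠ 0 := fun k => (hN _ (Nat.le_add_left N k)).ne'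
  refine ⟨fun k => ‖z (k + N)‖⁻¹ • z (k + N), ⟨fun k => ?_, ?_⟩, id, strictMono_id, ?_⟩
  · simp [norm_smul, hne k]
  · have h := (hTz.comp hshift).div (hzb.comp hshift) hb.ne'
    rw [mul_div_cancel_right₀ _ hb.ne'] at h
    refine h.congr fun k => ?_
    simp [norm_smul, div_eq_inv_mul]
  · exact (hz.comp_tendsto hshift).smul_of_tendsto ((hzb.comp hshift).inv₀ hb.ne')

lemma PropertyMp.weakClusterPtOfMaximizing_zero {X : Type*} [NormedAddCommGroup X]
    [NormedSpace ℝ X] {p : ℝ} (hp : 0 < p) (hmp : PropertyMp (X := X) p) {T : X →L[ℝ] X}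
    {x₀ : X} (hx₀ : WeakClusterPtOfMaximizing T x₀) (hlt : ‖x₀‖ < 1) :
    WeakClusterPtOfMaximizing T 0 := by
  obtain ⟨x, ⟨hx1, hxT⟩, φ, hφ, hxφ⟩ := hx₀
  set B := 1 - ‖x₀‖ ^ p
  set z : ℕ → X := fun n => x (φ n) - x₀
  have hB : 0 < B := sub_pos.2 (Real.rpow_lt_one (norm_nonneg _) hlt hp)
  have hzB : limsup (fun n => ‖z n‖ ^ p) atTop = B := by
    have h := hmp.limsup_norm_sub_rpow hxφ
    simp only [Function.comp_apply, hx1, Real.one_rpow, limsup_const] at h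
    exact h
  have hTzB : ‖T‖ ^ p * B ≤ limsup (fun n => ‖T (z n)‖ ^ p) atTop := by
    have hTx : Tendsto (fun n => ‖T (x (φ n))‖ ^ p) atTop (𝓝 (‖T‖ ^ p)) :=
      (hxT.comp hφ.tendsto_atTop).rpow_const (Or.inr hp.le)
    have hTx₀ := T.norm_apply_rpow_le x₀ hp.le
    have h := hmp.limsup_norm_sub_rpow (hxφ.map T)
    simp only [Function.comp_apply, hTx.limsup_eq] at h
    simp only [z, map_sub, h]
    linarith
  have hz_le : ∀ n, ‖z n‖ ≤ 2 := fun n => by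
    linarith [norm_sub_le (x (φ n)) x₀, hx1 (φ n)]
  obtain ⟨ψ, hψ, hzψ, hTzψ⟩ := exists_seq_tendsto_limsup_of_le_mul (by positivity)
    (fun n => by positivity) (fun n => by positivity) (fun n => T.norm_apply_rpow_le (z n) hp.le)
    ⟨2 ^ p, by rintro _ ⟨n, rfl⟩; exact Real.rpow_le_rpow (norm_nonneg _) (hz_le n) hp.le⟩
    (hzB ▸ hTzB)
  rw [hzB] at hzψ hTzψ
  have hroot : (‖T‖ ^ p * B) ^ p⁻¹ = ‖T‖ * B ^ p⁻¹ := by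
    rw [Real.mul_rpow (by positivity) hB.le, Real.rpow_rpow_inv (norm_nonneg _) hp.ne']
  exact weakClusterPtOfMaximizing_zero_of_tendsto (hxφ.sub_const.comp_tendsto hψ) (by positivity)
    (tendsto_rpow_inv_of_tendsto_rpow hp (fun _ => norm_nonneg _) hzψ)
    (hroot ▸ tendsto_rpow_inv_of_tendsto_rpow hp (fun _ => norm_nonneg _) hTzψ)

theorem stmt1_general {X : Type*} [NormedAddCommGroup X] [NormedSpace ℝ X]
    {p : ℝ} (hp : 1 < p) (hmp : PropertyMp (X := X) p)
    (T : X →L[ℝ] X) (h : alphaT T < 1) : alphaT T = 0 := by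
  set S := {r : ℝ | ∃ x₀ : X, WeakClusterPtOfMaximizing T x₀ ∧ r = ‖x₀‖}
  have hS : alphaT T = sInf S := rfl
  have hS_nonneg : ∀ r ∈ S, 0 ≤ r := by
    rintro _ ⟨x₀, -, rfl⟩
    exact norm_nonneg x₀
  rcases S.eq_empty_or_nonempty with hS_empty | hS_ne
  · rw [hS, hS_empty, Real.sInf_empty]
  obtain ⟨_, ⟨x₀, hx₀, rfl⟩, hlt⟩ := exists_lt_of_csInf_lt hS_ne (hS ▸ h)
  have h0 : (0 : ℝ) ∈ S :=
    ⟨0, hmp.weakClusterPtOfMaximizing_zero (by linarith) hx₀ hlt, norm_zero.symm⟩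
  rw [hS]
  exact le_antisymm (csInf_le ⟨0, hS_nonneg⟩ h0) (Real.sInf_nonneg hS_nonneg)

theorem stmt1 {X : Type*} [NormedAddCommGroup X] [NormedSpace ℝ X] [CompleteSpace X]
    [TopologicalSpace.SeparableSpace X]
    (hrefl : Function.Surjective (NormedSpace.inclusionInDoubleDual ℝ X))
    {p : ℝ} (hp : 1 < p) (hmp : PropertyMp (X := X) p)
    (T : X →L[ℝ] X) (h : alphaT T < 1) : alphaT T = 0 :=
  stmt1_general hp hmp T h
end

section
/- Let X be a reflexive Banach space with property (m_p) for some p > 1, and T a bounded operator on X. If (xₙ) is a maximizing sequence for T converging weakly to some nonzero x₀ ∈ B_X, then x₀/‖x₀‖ is a maximizing vector for T, i.e., ‖T(x₀/‖x₀‖)‖ = ‖T‖; in particular T attains its norm. -/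
open Filter Topology

theorem stmt3 {X : Type*} [NormedAddCommGroup X] [NormedSpace ℝ X] [CompleteSpace X]
    (hrefl : Function.Surjective (NormedSpace.inclusionInDoubleDual ℝ X))
    {p : ℝ} (hp : 1 < p) (hmp : PropertyMp (X := X) p)
    (T : X →L[ℝ] X) (x : ℕ → X) (hx : MaximizingSeq T x)
    (x₀ : X) (hw : WeakTendsto x x₀) (hx₀ : x₀ ≠ 0) (hball : ‖x₀‖ ≤ 1) :
    ‖T ((‖x₀‖⁻¹ : ℝ) • x₀)‖ = ‖T‖ ∧ ∃ y : X, ‖y‖ = 1 ∧ ‖T y‖ = ‖T‖ := by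
  have hp0 : (0:ℝ) < p := by linarith
  have hnx₀ : (0:ℝ) < ‖x₀‖ := norm_pos_iff.mpr hx₀
  -- key claim: ‖T x₀‖ = ‖T‖ * ‖x₀‖
  have key : ‖T x₀‖ = ‖T‖ * ‖x₀‖ := by
    rcases eq_or_lt_of_le (norm_nonneg T) with hT0 | hT0
    · have : T = 0 := by rwa [eq_comm, norm_eq_zero] at hT0
      simp [this]
    -- step 1 : limsup ‖x n - x₀‖^p = 1 - ‖x₀‖^p
    set S := limsup (fun n => ‖x n - x₀‖ ^ p) atTop with hSdef
    have hwnull : ∀ f : X →L[ℝ] ℝ, Tendsto (fun n => f (x n - x₀)) atTop (𝓝 (f (0:X))) := by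
      intro f
      simp only [map_sub, map_zero]
      exact tendsto_sub_nhds_zero_iff.mpr (hw f)
    have h1 : (1:ℝ) = S + ‖x₀‖ ^ p := by
      have := hmp (fun n => x n - x₀) hwnull x₀
      simp only [sub_add_cancel] at this
      rw [← this]
      have : (fun n => ‖x n‖ ^ p) = fun _ : ℕ => (1:ℝ) := by
        funext n; rw [hx.1 n, Real.one_rpow]
      rw [this, limsup_const]
    have hS_nonneg : (0:ℝ) ≤ S := by
      have : ‖x₀‖ ^ p ≤ 1 := by
        calc ‖x₀‖ ^ p ≤ 1 ^ p := Real.rpow_le_rpow (norm_nonneg _) hball hp0.le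
        _ = 1 := Real.one_rpow p
      linarith
    -- step 2 : limsup ‖T x n‖^p = ‖T‖^p
    have hlimT : limsup (fun n => ‖T (x n)‖ ^ p) atTop = ‖T‖ ^ p :=
      (hx.2.rpow_const (Or.inr hp0.le)).limsup_eq
    -- step 3 : apply mp to T x n - T x₀
    set L := limsup (fun n => ‖T (x n) - T x₀‖ ^ p) atTop with hLdef
    have hwnullT : ∀ f : X →L[ℝ] ℝ, Tendsto (fun n => f (T (x n) - T x₀)) atTop (𝓝 (f (0:X))) := by
      intro f
      simp only [map_sub, map_zero]
      exact tendsto_sub_nhds_zero_iff.mpr (hw (f.comp T))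
    have h2 : ‖T‖ ^ p = L + ‖T x₀‖ ^ p := by
      have := hmp (fun n => T (x n) - T x₀) hwnullT (T x₀)
      simp only [sub_add_cancel] at this
      rw [← hlimT, this]
    -- step 4 : L ≤ ‖T‖^p * S
    have hbound : ∀ n, ‖T (x n) - T x₀‖ ^ p ≤ ‖T‖ ^ p * ‖x n - x₀‖ ^ p := by
      intro n
      rw [← Real.mul_rpow (norm_nonneg T) (norm_nonneg _)]
      apply Real.rpow_le_rpow (norm_nonneg _) _ hp0.le
      calc ‖T (x n) - T x₀‖ = ‖T (x n - x₀)‖ := by rw [map_sub]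
      _ ≤ ‖T‖ * ‖x n - x₀‖ := T.le_opNorm _
    have hf_ub : ∀ n, ‖x n - x₀‖ ^ p ≤ 2 ^ p := fun n => by
      apply Real.rpow_le_rpow (norm_nonneg _) _ hp0.le
      calc ‖x n - x₀‖ ≤ ‖x n‖ + ‖x₀‖ := norm_sub_le _ _
      _ ≤ 2 := by rw [hx.1 n]; linarith
    have hc : (0:ℝ) < ‖T‖ ^ p := Real.rpow_pos_of_pos hT0 p
    have hmul : limsup (fun n => ‖T‖ ^ p * ‖x n - x₀‖ ^ p) atTop = ‖T‖ ^ p * S := by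
      rw [hSdef]
      exact ((OrderIso.mulLeft₀ (‖T‖ ^ p) hc).limsup_apply
        (isBoundedUnder_of ⟨2 ^ p, hf_ub⟩)
        (isCoboundedUnder_le_of_le _ fun n => Real.rpow_nonneg (norm_nonneg _) p)
        (isBoundedUnder_of ⟨‖T‖ ^ p * 2 ^ p, fun n =>
          mul_le_mul_of_nonneg_left (hf_ub n) hc.le⟩)
        (isCoboundedUnder_le_of_le _ fun n =>
          mul_nonneg hc.le (Real.rpow_nonneg (norm_nonneg _) p))).symm
    have hL : L ≤ ‖T‖ ^ p * S := by
      rw [← hmul]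
      exact limsup_le_limsup (Eventually.of_forall hbound)
        (isCoboundedUnder_le_of_le _ fun n => Real.rpow_nonneg (norm_nonneg _) p)
        (isBoundedUnder_of ⟨‖T‖ ^ p * 2 ^ p, fun n =>
          mul_le_mul_of_nonneg_left (hf_ub n) hc.le⟩)
    -- step 5 : conclude
    have h3 : (‖T‖ * ‖x₀‖) ^ p ≤ ‖T x₀‖ ^ p := by
      rw [Real.mul_rpow (norm_nonneg T) (norm_nonneg x₀)]
      have : ‖x₀‖ ^ p = 1 - S := by linarith
      rw [this]
      nlinarith
    have h4 : ‖T‖ * ‖x₀‖ ≤ ‖T x₀‖ :=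
      (Real.rpow_le_rpow_iff (mul_nonneg (norm_nonneg T) (norm_nonneg x₀))
        (norm_nonneg _) hp0).mp h3
    exact le_antisymm (T.le_opNorm x₀) h4
  have hnorm1 : ‖(‖x₀‖⁻¹ : ℝ) • x₀‖ = 1 := by
    rw [norm_smul, norm_inv, norm_norm, inv_mul_cancel₀ hnx₀.ne']
  have hmain : ‖T ((‖x₀‖⁻¹ : ℝ) • x₀)‖ = ‖T‖ := by
    rw [map_smul, norm_smul, norm_inv, norm_norm, key]
    field_simp
  exact ⟨hmain, ⟨(‖x₀‖⁻¹ : ℝ) • x₀, hnorm1, hmain⟩⟩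
end

section
/- Let X be a separable reflexive Banach space with property (m_p), p > 1, and suppose there is a sequence of compact operators (Kₙ) with ‖Kₙ‖ ≤ 1, ‖I − Kₙ‖ → 1, and ‖(I − Kₙ)x‖ → 0 for every x ∈ X. Let T be a nonzero bounded operator such that every maximizing sequence for T has norm 1 weak cluster points only (i.e., the minimal weak maximizing limit equals 1). Then ‖T‖ₑ < ‖T‖. -/
open Filter Topology

/-!
Suppose `‖T‖ ≤ ‖T‖ₑ`. As `T Kₙ` is compact, `‖T (I - Kₙ)‖ ≥ ‖T‖`, so there are `yₙ` in the unit
ball with `‖T wₙ‖ → ‖T‖` for `wₙ = (I - Kₙ) yₙ`; since `‖I - Kₙ‖ → 1`, also `‖wₙ‖ → 1` and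
`‖yₙ‖ → 1`. The normalized `wₙ` form a maximizing sequence, so along a subsequence they converge
weakly (the unit ball is weakly sequentially compact, `X` being reflexive with separable dual) to
some `x₀` of norm `1`, and (m_p) upgrades this to `wₙ → x₀` in norm. If `yₙ ⇀ y₀`, then
`‖(I - Kₙ)(yₙ - y₀)‖ → 1` and (m_p) force `y₀ = 0`. Then `Kₙ yₙ ⇀ -x₀` with
`‖Kₙ yₙ‖ ≤ 1 = ‖x₀‖`, so by (m_p) again `Kₙ yₙ → -x₀` in norm, whence `yₙ = wₙ + Kₙ yₙ → 0`,
contradicting `‖yₙ‖ → 1`.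
-/

open TopologicalSpace

section Weak

variable {X : Type*} [NormedAddCommGroup X] [NormedSpace ℝ X]

theorem Filter.Tendsto.weakTendsto {u : ℕ → X} {x : X} (hu : Tendsto u atTop (𝓝 x)) :
    WeakTendsto u x :=
  fun f => (f.continuous.tendsto x).comp hu

theorem WeakTendsto.sub {u v : ℕ → X} {x y : X} (hu : WeakTendsto u x) (hv : WeakTendsto v y) :
    WeakTendsto (fun n => u n - v n) (x - y) := fun f => by
  simpa only [map_sub] using (hu f).sub (hv f)

theorem WeakTendsto.comp_strictMono {u : ℕ → X} {x : X} (hu : WeakTendsto u x) {φ : ℕ → ℕ}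
    (hφ : StrictMono φ) : WeakTendsto (u ∘ φ) x :=
  fun f => (hu f).comp hφ.tendsto_atTop

end Weak

section SeparableDual

variable {E : Type*} [NormedAddCommGroup E] [NormedSpace ℝ E]

theorem Submodule.exists_strongDual_ne_zero_of_notMem_topologicalClosure (S : Submodule ℝ E)
    {z : E} (hz : z ∉ S.topologicalClosure) :
    ∃ f : StrongDual ℝ E, f z ≠ 0 ∧ ∀ x ∈ S, f x = 0 := by
  have : IsClosed (S.topologicalClosure : Set E) := S.isClosed_topologicalClosure
  obtain ⟨g, hg⟩ := SeparatingDual.exists_ne_zero (R := ℝ)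
    (x := S.topologicalClosure.mkQL z) (by simpa [Submodule.Quotient.mk_eq_zero] using hz)
  refine ⟨g.comp S.topologicalClosure.mkQL, hg, fun x hx => ?_⟩
  have : S.topologicalClosure.mkQL x = 0 := by
    simpa [Submodule.Quotient.mk_eq_zero] using S.le_topologicalClosure hx
  simp [this]

theorem ContinuousLinearMap.exists_half_opNorm_le_norm_apply {F : Type*} [NormedAddCommGroup F]
    [NormedSpace ℝ F] (f : E →L[ℝ] F) : ∃ v : E, ‖v‖ ≤ 1 ∧ ‖f‖ / 2 ≤ ‖f v‖ := by
  rcases eq_or_ne f 0 with rfl | hf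
  · exact ⟨0, by simp⟩
  · obtain ⟨v, hv1, hv⟩ := f.exists_lt_apply_of_lt_opNorm (half_lt_self (norm_pos_iff.2 hf))
    exact ⟨v, hv1.le, hv.le⟩

theorem separableSpace_of_separableSpace_strongDual [SeparableSpace (StrongDual ℝ E)] :
    SeparableSpace E := by
  obtain ⟨g, hg⟩ := exists_dense_seq (StrongDual ℝ E)
  choose v hv1 hv2 using fun n => (g n).exists_half_opNorm_le_norm_apply
  set S := Submodule.span ℝ (Set.range v)
  have hS : S.topologicalClosure = ⊤ := by
    refine eq_top_iff.2 fun z _ => by_contra fun hz => ?_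
    obtain ⟨f, hfz, hfS⟩ := S.exists_strongDual_ne_zero_of_notMem_topologicalClosure hz
    have hf : 0 < ‖f‖ := norm_pos_iff.2 fun h => hfz (by simp [h])
    obtain ⟨n, hn⟩ := hg.exists_dist_lt f (by positivity : 0 < ‖f‖ / 4)
    rw [dist_eq_norm] at hn
    -- `g n` is close to `f`, which vanishes at `v n`, where `g n` is half-normed
    have hgv : ‖g n (v n)‖ ≤ ‖f - g n‖ :=
      calc ‖g n (v n)‖ = ‖(f - g n) (v n)‖ := by
            simp [hfS _ (Submodule.subset_span ⟨n, rfl⟩)]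
        _ ≤ ‖f - g n‖ * ‖v n‖ := (f - g n).le_opNorm _
        _ ≤ ‖f - g n‖ := mul_le_of_le_one_right (norm_nonneg _) (hv1 n)
    linarith [norm_le_insert' f (g n), hv2 n]
  have hsep : IsSeparable (closure (S : Set E)) :=
    ((Set.countable_range v).isSeparable.span).closure
  rw [← Submodule.topologicalClosure_coe, hS, Submodule.top_coe] at hsep
  exact isSeparable_univ_iff.1 hsep

end SeparableDual

theorem exists_strictMono_weakTendsto_of_norm_le {X : Type*} [NormedAddCommGroup X]
    [NormedSpace ℝ X] [SeparableSpace X]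
    (hrefl : Function.Surjective (NormedSpace.inclusionInDoubleDual ℝ X))
    {x : ℕ → X} {C : ℝ} (hx : ∀ n, ‖x n‖ ≤ C) :
    ∃ φ : ℕ → ℕ, StrictMono φ ∧ ∃ x₀, WeakTendsto (x ∘ φ) x₀ := by
  -- sequential Banach–Alaoglu in `X** ≅ X`, whose predual `X*` is separable because `X**` is
  set J := NormedSpace.inclusionInDoubleDual ℝ X
  have : SeparableSpace (StrongDual ℝ (StrongDual ℝ X)) :=
    hrefl.denseRange.separableSpace J.continuous
  have : SeparableSpace (StrongDual ℝ X) := separableSpace_of_separableSpace_strongDual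
  have hmem : ∀ n, StrongDual.toWeakDual (J (x n)) ∈
      WeakDual.toStrongDual ⁻¹' Metric.closedBall (0 : StrongDual ℝ (StrongDual ℝ X)) C :=
    fun n => show dist (J (x n)) 0 ≤ C from
      (dist_zero_right (J (x n))).trans_le ((NormedSpace.double_dual_bound ℝ X (x n)).trans (hx n))
  obtain ⟨F, -, φ, hφ, hF⟩ := WeakDual.isSeqCompact_closedBall ℝ _ 0 C hmem
  obtain ⟨x₀, hx₀⟩ := hrefl (WeakDual.toStrongDual F)
  refine ⟨φ, hφ, x₀, fun f => ?_⟩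
  have hFf : F f = f x₀ := by
    rw [← WeakDual.coe_toStrongDual F, ← hx₀]
    rfl
  rw [← hFf]
  exact ((WeakDual.eval_continuous f).tendsto F).comp hF

theorem tendsto_zero_of_limsup_rpow_le_zero {p : ℝ} (hp : 0 < p) {u : ℕ → ℝ} {C : ℝ}
    (h0 : ∀ n, 0 ≤ u n) (hC : ∀ n, u n ≤ C) (h : limsup (fun n => u n ^ p) atTop ≤ 0) :
    Tendsto u atTop (𝓝 0) := by
  have hbdd : IsBoundedUnder (· ≤ ·) atTop (fun n => u n ^ p) :=
    isBoundedUnder_of ⟨C ^ p, fun n => Real.rpow_le_rpow (h0 n) (hC n) hp.le⟩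
  have hpow : Tendsto (fun n => u n ^ p) atTop (𝓝 0) :=
    tendsto_of_le_liminf_of_limsup_le
      (le_liminf_of_le hbdd.isCoboundedUnder_ge
        (Eventually.of_forall fun n => Real.rpow_nonneg (h0 n) p))
      h hbdd (isBoundedUnder_of ⟨0, fun n => Real.rpow_nonneg (h0 n) p⟩)
  have hroot := hpow.rpow_const (p := p⁻¹) (Or.inr (inv_nonneg.2 hp.le))
  rw [Real.zero_rpow (inv_ne_zero hp.ne')] at hroot
  simpa only [Real.rpow_rpow_inv (h0 _) hp.ne'] using hroot

theorem limsup_rpow_le_of_le {p : ℝ} (hp : 0 ≤ p) {u : ℕ → ℝ} {C : ℝ} (h0 : ∀ n, 0 ≤ u n)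
    (hC : ∀ n, u n ≤ C) : limsup (fun n => u n ^ p) atTop ≤ C ^ p :=
  limsup_le_of_le (isCoboundedUnder_le_of_le atTop fun n => Real.rpow_nonneg (h0 n) p)
    (Eventually.of_forall fun n => Real.rpow_le_rpow (h0 n) (hC n) hp)

namespace PropertyMp

variable {X : Type*} [NormedAddCommGroup X] [NormedSpace ℝ X] {p : ℝ}

theorem limsup_rpow_norm_eq (hmp : PropertyMp (X := X) p) {u : ℕ → X} {x : X}
    (hu : WeakTendsto u x) :
    limsup (fun n => ‖u n‖ ^ p) atTop = limsup (fun n => ‖u n - x‖ ^ p) atTop + ‖x‖ ^ p := by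
  have hu₀ : WeakTendsto (fun n => u n - x) 0 := by
    simpa using hu.sub (tendsto_const_nhds (x := x)).weakTendsto
  simpa using hmp _ hu₀ x

theorem tendsto_of_weakTendsto_of_norm_le (hmp : PropertyMp (X := X) p) (hp : 0 < p)
    {u : ℕ → X} {x : X} (hu : WeakTendsto u x) (hle : ∀ n, ‖u n‖ ≤ ‖x‖) :
    Tendsto u atTop (𝓝 x) := by
  rw [tendsto_iff_norm_sub_tendsto_zero]
  refine tendsto_zero_of_limsup_rpow_le_zero hp (fun n => norm_nonneg _) (C := 2 * ‖x‖)
    (fun n => by linarith [norm_sub_le (u n) x, hle n]) ?_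
  linarith [hmp.limsup_rpow_norm_eq hu, limsup_rpow_le_of_le hp.le (fun n => norm_nonneg (u n)) hle]

theorem eq_zero_of_weakTendsto (hmp : PropertyMp (X := X) p) (hp : 0 < p) {u : ℕ → X} {x : X}
    (hu : WeakTendsto u x) (hle : ∀ n, ‖u n‖ ≤ 1) {v : ℕ → ℝ} (hv : Tendsto v atTop (𝓝 1))
    (hvu : ∀ᶠ n in atTop, v n ≤ ‖u n - x‖) : x = 0 := by
  have hvp : Tendsto (fun n => v n ^ p) atTop (𝓝 1) := by
    simpa using hv.rpow_const (Or.inr hp.le)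
  have hlow : 1 ≤ limsup (fun n => ‖u n - x‖ ^ p) atTop := by
    rw [← hvp.limsup_eq]
    refine limsup_le_limsup ?_ hvp.isCoboundedUnder_le
      (isBoundedUnder_of ⟨(1 + ‖x‖) ^ p, fun n => Real.rpow_le_rpow (norm_nonneg _)
        (by linarith [norm_sub_le (u n) x, hle n]) hp.le⟩)
    filter_upwards [hvu, hv.eventually (lt_mem_nhds zero_lt_one)] with n hn hn₀
    exact Real.rpow_le_rpow hn₀.le hn hp.le
  have hup := limsup_rpow_le_of_le hp.le (fun n => norm_nonneg (u n)) hle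
  rw [Real.one_rpow, hmp.limsup_rpow_norm_eq hu] at hup
  by_contra hx
  linarith [Real.rpow_pos_of_pos (norm_pos_iff.2 hx) p]

end PropertyMp

section Operators

variable {E F : Type*} [NormedAddCommGroup E] [NormedSpace ℝ E] [NormedAddCommGroup F]
  [NormedSpace ℝ F]

theorem ContinuousLinearMap.exists_seq_tendsto_norm_apply (B : ℕ → E →L[ℝ] F)
    (hB : ∀ n, B n ≠ 0) {L : ℝ} (hL : Tendsto (fun n => ‖B n‖) atTop (𝓝 L)) :
    ∃ y : ℕ → E, (∀ n, ‖y n‖ ≤ 1) ∧ (∀ n, B n (y n) ≠ 0) ∧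
      Tendsto (fun n => ‖B n (y n)‖) atTop (𝓝 L) := by
  have hr : ∀ n, max (‖B n‖ / 2) (‖B n‖ - 1 / (n + 1)) < ‖B n‖ := fun n =>
    max_lt (half_lt_self (norm_pos_iff.2 (hB n))) (sub_lt_self _ Nat.one_div_pos_of_nat)
  choose y hy1 hy using fun n => (B n).exists_lt_apply_of_lt_opNorm (hr n)
  refine ⟨y, fun n => (hy1 n).le, fun n => norm_pos_iff.1 ?_, ?_⟩
  · exact (half_pos (norm_pos_iff.2 (hB n))).trans ((le_max_left _ _).trans_lt (hy n))
  · refine tendsto_of_tendsto_of_tendsto_of_le_of_le (g := fun n => ‖B n‖ - 1 / (n + 1))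
      (by simpa using hL.sub tendsto_one_div_add_atTop_nhds_zero_nat) hL
      (fun n => ((le_max_right _ _).trans_lt (hy n)).le) fun n => ?_
    simpa using (B n).le_opNorm_of_le (hy1 n).le

theorem ContinuousLinearMap.tendsto_norm_of_tendsto_norm_apply (B : ℕ → E →L[ℝ] F) {L : ℝ}
    (hL : L ≠ 0) (hB : Tendsto (fun n => ‖B n‖) atTop (𝓝 L)) {y : ℕ → E}
    (hBy : Tendsto (fun n => ‖B n (y n)‖) atTop (𝓝 L)) {a : ℕ → ℝ} (hya : ∀ n, ‖y n‖ ≤ a n)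
    (ha : Tendsto a atTop (𝓝 1)) : Tendsto (fun n => ‖y n‖) atTop (𝓝 1) := by
  have hprod : Tendsto (fun n => ‖B n‖ * ‖y n‖) atTop (𝓝 L) :=
    tendsto_of_tendsto_of_tendsto_of_le_of_le hBy (by simpa using hB.mul ha)
      (fun n => (B n).le_opNorm (y n))
      (fun n => mul_le_mul_of_nonneg_left (hya n) (norm_nonneg _))
  have hquot := hprod.div hB hL
  rw [div_self hL] at hquot
  refine hquot.congr' ?_
  filter_upwards [hB.eventually_ne hL] with n hn
  exact mul_div_cancel_left₀ _ hn

theorem ContinuousLinearMap.exists_seq_norming_of_le_opNorm_comp {G : Type*}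
    [NormedAddCommGroup G] [NormedSpace ℝ G] {T : G →L[ℝ] F} (hT : T ≠ 0)
    {A : ℕ → E →L[ℝ] G} (hA : Tendsto (fun n => ‖A n‖) atTop (𝓝 1))
    (hTA : ∀ n, ‖T‖ ≤ ‖T ∘L A n‖) :
    ∃ y : ℕ → E, (∀ n, ‖y n‖ ≤ 1) ∧ (∀ n, A n (y n) ≠ 0) ∧
      Tendsto (fun n => ‖y n‖) atTop (𝓝 1) ∧ Tendsto (fun n => ‖A n (y n)‖) atTop (𝓝 1) ∧
      Tendsto (fun n => ‖T (A n (y n))‖) atTop (𝓝 ‖T‖) := by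
  have hT₀ : ‖T‖ ≠ 0 := norm_ne_zero_iff.2 hT
  have hTAlim : Tendsto (fun n => ‖T ∘L A n‖) atTop (𝓝 ‖T‖) :=
    tendsto_of_tendsto_of_tendsto_of_le_of_le tendsto_const_nhds
      (by simpa using (tendsto_const_nhds (x := ‖T‖)).mul hA) hTA
      (fun n => T.opNorm_comp_le (A n))
  obtain ⟨y, hy1, hTAy₀, hTAy⟩ := exists_seq_tendsto_norm_apply _
    (fun n h => hT₀ (le_antisymm (by simpa [h] using hTA n) (norm_nonneg T))) hTAlim
  refine ⟨y, hy1, fun n h => hTAy₀ n (by simp [h]),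
    tendsto_norm_of_tendsto_norm_apply _ hT₀ hTAlim hTAy hy1 tendsto_const_nhds,
    tendsto_norm_of_tendsto_norm_apply (fun _ => T) hT₀ tendsto_const_nhds hTAy
      (fun n => ((A n).le_opNorm_of_le (hy1 n)).trans_eq (mul_one _)) hA, hTAy⟩

theorem tendsto_of_tendsto_inv_norm_smul {w : ℕ → E} {x : E}
    (hw : Tendsto (fun n => ‖w n‖) atTop (𝓝 1))
    (hz : Tendsto (fun n => ‖w n‖⁻¹ • w n) atTop (𝓝 x)) : Tendsto w atTop (𝓝 x) := by
  refine (one_smul ℝ x ▸ hw.smul hz).congr fun n => ?_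
  rcases eq_or_ne (w n) 0 with h | h
  · simp [h]
  · simp [smul_smul, h]

end Operators

section EssentialNorm

variable {X : Type*} [NormedAddCommGroup X] [NormedSpace ℝ X]

theorem essNorm_le_norm_sub (T : X →L[ℝ] X) {K : X →L[ℝ] X} (hK : IsCompactOperator K) :
    essNorm T ≤ ‖T - K‖ :=
  csInf_le ⟨0, by rintro _ ⟨K', -, rfl⟩; exact norm_nonneg _⟩ ⟨K, hK, rfl⟩

theorem maximizingSeq_inv_norm_smul {T : X →L[ℝ] X} {w : ℕ → X} (hw₀ : ∀ n, w n ≠ 0)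
    (hw : Tendsto (fun n => ‖w n‖) atTop (𝓝 1))
    (hTw : Tendsto (fun n => ‖T (w n)‖) atTop (𝓝 ‖T‖)) :
    MaximizingSeq T (fun n => ‖w n‖⁻¹ • w n) := by
  refine ⟨fun n => norm_smul_inv_norm (hw₀ n), ?_⟩
  simpa [norm_smul] using (hw.inv₀ one_ne_zero).mul hTw

end EssentialNorm

theorem PropertyMp.not_tendsto_norm_of_tendsto_sub_apply {X : Type*} [NormedAddCommGroup X]
    [NormedSpace ℝ X] {p : ℝ} (hmp : PropertyMp (X := X) p) (hp : 0 < p)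
    {K : ℕ → X →L[ℝ] X} (hKnorm : ∀ n, ‖K n‖ ≤ 1)
    (hIK : Tendsto (fun n => ‖ContinuousLinearMap.id ℝ X - K n‖) atTop (𝓝 1))
    (hpt : ∀ x : X, Tendsto (fun n => ‖x - K n x‖) atTop (𝓝 0))
    {y : ℕ → X} (hy1 : ∀ n, ‖y n‖ ≤ 1) {y₀ : X} (hy : WeakTendsto y y₀) {x₀ : X} (hx₀ : ‖x₀‖ = 1)
    (hw : Tendsto (fun n => y n - K n (y n)) atTop (𝓝 x₀)) :
    ¬ Tendsto (fun n => ‖y n‖) atTop (𝓝 1) := by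
  intro hylim
  have hshift : Tendsto (fun n => (y n - y₀) - K n (y n - y₀)) atTop (𝓝 x₀) := by
    have hKy₀ : Tendsto (fun n => y₀ - K n y₀) atTop (𝓝 0) :=
      tendsto_zero_iff_norm_tendsto_zero.2 (hpt y₀)
    convert hw.sub hKy₀ using 2 with n
    · simp only [map_sub]; abel
    · simp
  -- `‖y n - y₀‖ ≥ ‖(I - K n) (y n - y₀)‖ / ‖I - K n‖ → 1`, which forces `y₀ = 0` by (m_p)
  have hy₀ : y₀ = 0 := by
    refine hmp.eq_zero_of_weakTendsto hp hy hy1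
      (v := fun n => ‖(y n - y₀) - K n (y n - y₀)‖ / ‖ContinuousLinearMap.id ℝ X - K n‖)
      (by simpa [hx₀, Pi.div_def] using hshift.norm.div hIK one_ne_zero) ?_
    filter_upwards [hIK.eventually (lt_mem_nhds one_pos)] with n hn
    rw [div_le_iff₀ hn, mul_comm]
    simpa using (ContinuousLinearMap.id ℝ X - K n).le_opNorm (y n - y₀)
  subst hy₀
  have hKy : Tendsto (fun n => K n (y n)) atTop (𝓝 (-x₀)) := by
    refine hmp.tendsto_of_weakTendsto_of_norm_le hp ?_ fun n => ?_
    · simpa using hy.sub hw.weakTendsto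
    · simpa [hx₀] using (K n).le_of_opNorm_le_of_le (hKnorm n) (hy1 n)
  have hy0 : Tendsto (fun n => ‖y n‖) atTop (𝓝 0) := by
    simpa using (hw.add hKy).norm
  exact one_ne_zero (tendsto_nhds_unique hylim hy0)

theorem stmt5_general {X : Type*} [NormedAddCommGroup X] [NormedSpace ℝ X]
    [TopologicalSpace.SeparableSpace X]
    (hrefl : Function.Surjective (NormedSpace.inclusionInDoubleDual ℝ X))
    {p : ℝ} (hp : 1 < p) (hmp : PropertyMp (X := X) p)
    (K : ℕ → X →L[ℝ] X) (hKcpt : ∀ n, IsCompactOperator (K n))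
    (hKnorm : ∀ n, ‖K n‖ ≤ 1)
    (hIK : Tendsto (fun n => ‖(ContinuousLinearMap.id ℝ X) - K n‖) atTop (𝓝 1))
    (hpt : ∀ x : X, Tendsto (fun n => ‖x - K n x‖) atTop (𝓝 0))
    (T : X →L[ℝ] X) (hT : T ≠ 0)
    (hmin : ∀ x₀ : X, WeakClusterPtOfMaximizing T x₀ → ‖x₀‖ = 1) :
    essNorm T < ‖T‖ := by
  by_contra! hle
  have hp₀ : 0 < p := zero_lt_one.trans hp
  set A : ℕ → X →L[ℝ] X := fun n => ContinuousLinearMap.id ℝ X - K n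
  have hTA : ∀ n, ‖T‖ ≤ ‖T ∘L A n‖ := fun n => hle.trans <| by
    simpa [A, ContinuousLinearMap.comp_sub] using essNorm_le_norm_sub T ((hKcpt n).clm_comp T)
  obtain ⟨y, hy1, hw₀, hylim, hwlim, hTw⟩ :=
    ContinuousLinearMap.exists_seq_norming_of_le_opNorm_comp hT hIK hTA
  set z := fun n => ‖A n (y n)‖⁻¹ • A n (y n)
  have hz : MaximizingSeq T z := maximizingSeq_inv_norm_smul hw₀ hwlim hTw
  obtain ⟨φ₁, hφ₁, y₀, hy₀⟩ := exists_strictMono_weakTendsto_of_norm_le hrefl hy1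
  obtain ⟨φ₂, hφ₂, x₀, hx₀⟩ :=
    exists_strictMono_weakTendsto_of_norm_le hrefl (x := z ∘ φ₁) fun n => (hz.1 _).le
  set φ := φ₁ ∘ φ₂
  have hφ : StrictMono φ := hφ₁.comp hφ₂
  have hx₀1 : ‖x₀‖ = 1 := hmin x₀ ⟨_, hz, φ, hφ, hx₀⟩
  have hzx₀ := hmp.tendsto_of_weakTendsto_of_norm_le hp₀ hx₀
    fun n => ((hz.1 _).trans hx₀1.symm).le
  have hw := tendsto_of_tendsto_inv_norm_smul (hwlim.comp hφ.tendsto_atTop) hzx₀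
  exact hmp.not_tendsto_norm_of_tendsto_sub_apply hp₀ (K := K ∘ φ) (fun n => hKnorm _)
    (hIK.comp hφ.tendsto_atTop) (fun x => (hpt x).comp hφ.tendsto_atTop) (fun n => hy1 _)
    (hy₀.comp_strictMono hφ₂) hx₀1 hw (hylim.comp hφ.tendsto_atTop)

theorem stmt5 {X : Type*} [NormedAddCommGroup X] [NormedSpace ℝ X] [CompleteSpace X]
    [TopologicalSpace.SeparableSpace X]
    (hrefl : Function.Surjective (NormedSpace.inclusionInDoubleDual ℝ X))
    {p : ℝ} (hp : 1 < p) (hmp : PropertyMp (X := X) p)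
    (K : ℕ → X →L[ℝ] X) (hKcpt : ∀ n, IsCompactOperator (K n))
    (hKnorm : ∀ n, ‖K n‖ ≤ 1)
    (hIK : Tendsto (fun n => ‖(ContinuousLinearMap.id ℝ X) - K n‖) atTop (𝓝 1))
    (hpt : ∀ x : X, Tendsto (fun n => ‖x - K n x‖) atTop (𝓝 0))
    (T : X →L[ℝ] X) (hT : T ≠ 0)
    (hmin : ∀ x₀ : X, WeakClusterPtOfMaximizing T x₀ → ‖x₀‖ = 1) :
    essNorm T < ‖T‖ :=
  stmt5_general hrefl hp hmp K hKcpt hKnorm hIK hpt T hT hmin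
end

section
/- Let X be a Banach space with property (m_p), p > 1. Then every sequence (xₙ) in the closed unit ball of X that converges weakly to a point x₀ of norm 1 converges in norm to x₀. -/
open Filter Topology

theorem stmt7 {X : Type*} [NormedAddCommGroup X] [NormedSpace ℝ X] [CompleteSpace X]
    {p : ℝ} (hp : 1 < p) (hmp : PropertyMp (X := X) p)
    (x : ℕ → X) (hx : ∀ n, ‖x n‖ ≤ 1) (x₀ : X) (hx₀ : ‖x₀‖ = 1)
    (hw : WeakTendsto x x₀) :
    Tendsto x atTop (𝓝 x₀) := by
  have hp0 : (0:ℝ) < p := lt_trans zero_lt_one hp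
  set y : ℕ → X := fun n => x n - x₀ with hy
  have hwy : WeakTendsto y 0 := by
    intro f
    have h1 : Tendsto (fun n => f (x n) - f x₀) atTop (𝓝 (f x₀ - f x₀)) :=
      (hw f).sub tendsto_const_nhds
    simpa [y] using h1
  have key := hmp y hwy x₀
  have heq : (fun n => ‖y n + x₀‖ ^ p) = fun n => ‖x n‖ ^ p := by
    funext n; simp [y]
  rw [heq, hx₀, Real.one_rpow] at key
  have hb1 : ∀ n, ‖x n‖ ^ p ≤ 1 := fun n =>
    Real.rpow_le_one (norm_nonneg _) (hx n) hp0.le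
  have hnn : ∀ n, (0:ℝ) ≤ ‖x n‖ ^ p := fun n => Real.rpow_nonneg (norm_nonneg _) p
  have hls1 : limsup (fun n => ‖x n‖ ^ p) atTop ≤ 1 :=
    limsup_le_of_le (isCoboundedUnder_le_of_le atTop hnn) (Eventually.of_forall hb1)
  have hlsy : limsup (fun n => ‖y n‖ ^ p) atTop ≤ 0 := by
    rw [key] at hls1; linarith
  have hynn : ∀ n, (0:ℝ) ≤ ‖y n‖ ^ p := fun n => Real.rpow_nonneg (norm_nonneg _) p
  have hybd : ∀ n, ‖y n‖ ^ p ≤ 2 ^ p := fun n => by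
    apply Real.rpow_le_rpow (norm_nonneg _) _ hp0.le
    calc ‖y n‖ ≤ ‖x n‖ + ‖x₀‖ := norm_sub_le _ _
      _ ≤ 2 := by rw [hx₀]; linarith [hx n]
  have hbdd : IsBoundedUnder (· ≤ ·) atTop (fun n => ‖y n‖ ^ p) :=
    isBoundedUnder_of ⟨2 ^ p, hybd⟩
  have hbdd' : IsBoundedUnder (· ≥ ·) atTop (fun n => ‖y n‖ ^ p) :=
    isBoundedUnder_of ⟨0, fun n => (hynn n : _)⟩
  have hli : (0:ℝ) ≤ liminf (fun n => ‖y n‖ ^ p) atTop :=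
    le_liminf_of_le (isCoboundedUnder_ge_of_le atTop hybd) (Eventually.of_forall hynn)
  have htp : Tendsto (fun n => ‖y n‖ ^ p) atTop (𝓝 0) :=
    tendsto_of_le_liminf_of_limsup_le hli hlsy hbdd hbdd'
  have ht : Tendsto (fun n => ‖y n‖) atTop (𝓝 0) := by
    have h2 := htp.rpow_const (p := p⁻¹) (Or.inr (inv_nonneg.mpr hp0.le))
    have he : (fun n => (‖y n‖ ^ p) ^ p⁻¹) = fun n => ‖y n‖ := by
      funext n
      rw [← Real.rpow_mul (norm_nonneg _), mul_inv_cancel₀ hp0.ne', Real.rpow_one]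
    rw [he] at h2
    simpa [Real.zero_rpow (inv_ne_zero hp0.ne')] using h2
  exact tendsto_iff_norm_sub_tendsto_zero.mpr (by simpa [y] using ht)
end

section
/- For 1 < p < ∞, the space ℓ^p satisfies property (m_p): for every weakly null sequence (xₙ) in ℓ^p and every x ∈ ℓ^p, limsupₙ ‖xₙ + x‖^p = limsupₙ ‖xₙ‖^p + ‖x‖^p. -/
open Filter Topology
open scoped ENNReal

/-!
A Brezis–Lieb argument. A weakly null sequence `xₙ` in `ℓ^p` is bounded (uniform boundedness)
and tends to `0` coordinatewise. The elementary inequality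
`|‖a + b‖^p - ‖a‖^p| ≤ η ‖a‖^p + K_η ‖b‖^p` then lets dominated convergence show that
`‖xₙ + y‖^p - ‖xₙ‖^p - ‖y‖^p = ∑ᵢ (|xₙᵢ + yᵢ|^p - |xₙᵢ|^p - |yᵢ|^p) → 0`, up to an error `η sup ‖xₙ‖^p`
with `η` arbitrary. Taking `limsup` gives the claim.
-/

theorem add_rpow_le_one_add_rpow_mul_rpow_add {r : ℝ} (hr : 0 ≤ r) {ε a b : ℝ} (hε : 0 < ε)
    (ha : 0 ≤ a) (hb : 0 ≤ b) :
    (a + b) ^ r ≤ (1 + ε) ^ r * a ^ r + ((1 + ε) / ε) ^ r * b ^ r := by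
  rcases le_or_gt b (ε * a) with h | h
  · calc (a + b) ^ r ≤ ((1 + ε) * a) ^ r := by gcongr; linarith
      _ = (1 + ε) ^ r * a ^ r := Real.mul_rpow (by positivity) ha
      _ ≤ _ := le_add_of_nonneg_right (by positivity)
  · calc (a + b) ^ r ≤ ((1 + ε) / ε * b) ^ r := by
          gcongr
          rw [div_mul_eq_mul_div, le_div_iff₀ hε]; nlinarith
      _ = ((1 + ε) / ε) ^ r * b ^ r := Real.mul_rpow (by positivity) hb
      _ ≤ _ := le_add_of_nonneg_left (by positivity)

theorem exists_abs_rpow_sub_rpow_le {r : ℝ} (hr : 0 ≤ r) {η : ℝ} (hη : 0 < η) :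
    ∃ K, ∀ a b c : ℝ, 0 ≤ a → 0 ≤ c → |c - a| ≤ b →
      |c ^ r - a ^ r| ≤ η * a ^ r + K * b ^ r := by
  have hcont : Tendsto (fun t : ℝ => ((1 + t) ^ r - 1) * (1 + t) ^ r) (𝓝[>] 0) (𝓝 0) := by
    have h : Continuous fun t : ℝ => ((1 + t) ^ r - 1) * (1 + t) ^ r := by
      fun_prop (disch := exact fun _ => Or.inr hr)
    simpa using h.continuousAt.tendsto.mono_left (nhdsWithin_le_nhds (a := (0 : ℝ)))
  obtain ⟨ε, hεη, hε⟩ := ((hcont.eventually (eventually_lt_nhds hη)).and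
    self_mem_nhdsWithin).exists
  set M := (1 + ε) ^ r
  set K := ((1 + ε) / ε) ^ r
  have hM : 1 ≤ M := Real.one_le_rpow (by linarith [hε]) hr
  have hK : 0 ≤ K := by positivity
  have hMη : (M - 1) * M ≤ η := hεη.le
  have peter_paul {a b c : ℝ} (ha : 0 ≤ a) (hb : 0 ≤ b) (hc : 0 ≤ c) (h : c ≤ a + b) :
      c ^ r ≤ M * a ^ r + K * b ^ r :=
    (Real.rpow_le_rpow hc h hr).trans (add_rpow_le_one_add_rpow_mul_rpow_add hr hε ha hb)
  refine ⟨M * K, fun a b c ha hc hcab => abs_le.2 ⟨?_, ?_⟩⟩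
  all_goals
    obtain ⟨hca, hac⟩ := abs_sub_le_iff.1 hcab
    have hb : 0 ≤ b := (abs_nonneg _).trans hcab
    have ha' : 0 ≤ a ^ r := Real.rpow_nonneg ha r
    have hb' : 0 ≤ b ^ r := Real.rpow_nonneg hb r
  · have h₁ := peter_paul hc hb ha (by linarith)
    have h₂ := mul_le_mul_of_nonneg_left (peter_paul ha hb hc (by linarith)) (sub_nonneg.2 hM)
    nlinarith [mul_le_mul_of_nonneg_right hMη ha']
  · have hMη' : M - 1 ≤ η := by nlinarith
    nlinarith [peter_paul ha hb hc (by linarith), mul_le_mul_of_nonneg_right hMη' ha',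
      mul_le_mul_of_nonneg_right hM (mul_nonneg hK hb')]

theorem tendsto_tsum_of_abs_le_mul_add {ι β : Type*} {l : Filter β} {f g : β → ι → ℝ}
    {h : ι → ℝ} {B : ℝ} (hf : ∀ i, Tendsto (f · i) l (𝓝 0)) (hg : ∀ n i, 0 ≤ g n i)
    (hgs : ∀ n, Summable (g n)) (hgB : ∀ n, ∑' i, g n i ≤ B) (hh : Summable h)
    (hbound : ∀ η > 0, ∃ K, ∀ n i, |f n i| ≤ η * g n i + K * h i) :
    Tendsto (fun n => ∑' i, f n i) l (𝓝 0) := by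
  rw [Metric.tendsto_nhds]
  intro δ hδ
  obtain ⟨η, hη, hBη⟩ := exists_pos_mul_lt (half_pos hδ) B
  obtain ⟨K, hK⟩ := hbound η hη
  -- The excess of `|f|` over `η g` is dominated by the fixed summable `|K h|`.
  set W : β → ι → ℝ := fun n i => max (|f n i| - η * g n i) 0
  have hW : ∀ n i, ‖W n i‖ ≤ |K * h i| := fun n i => by
    rw [Real.norm_of_nonneg (le_max_right _ _)]
    exact max_le (by linarith [hK n i, le_abs_self (K * h i)]) (abs_nonneg _)
  have hWs : ∀ n, Summable (W n) := fun n => (hh.mul_left K).abs.of_norm_bounded (hW n)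
  have hW0 : Tendsto (fun n => ∑' i, W n i) l (𝓝 0) := by
    have hWi : ∀ i, Tendsto (W · i) l (𝓝 0) := fun i =>
      squeeze_zero (fun n => le_max_right _ _)
        (fun n => max_le (by nlinarith [hg n i]) (abs_nonneg _))
        (by simpa using (hf i).abs)
    simpa using tendsto_tsum_of_dominated_convergence (hh.mul_left K).abs hWi
      (Eventually.of_forall hW)
  filter_upwards [hW0.eventually (gt_mem_nhds (half_pos hδ))] with n hn
  have hfW : ∀ i, |f n i| ≤ W n i + η * g n i := fun i => by
    linarith [le_max_left (|f n i| - η * g n i) 0]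
  have hfs : Summable fun i => |f n i| :=
    ((hWs n).add ((hgs n).mul_left η)).of_nonneg_of_le (fun i => abs_nonneg _) hfW
  rw [dist_zero_right, Real.norm_eq_abs]
  calc |∑' i, f n i| ≤ ∑' i, |f n i| := by
        simpa only [Real.norm_eq_abs] using norm_tsum_le_tsum_norm (f := f n) hfs
    _ ≤ ∑' i, (W n i + η * g n i) :=
        hfs.tsum_le_tsum hfW ((hWs n).add ((hgs n).mul_left η))
    _ = ∑' i, W n i + η * ∑' i, g n i := by
        rw [(hWs n).tsum_add ((hgs n).mul_left η), tsum_mul_left]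
    _ < δ / 2 + δ / 2 := by
        nlinarith [mul_le_mul_of_nonneg_left (hgB n) hη.le]
    _ = δ := add_halves δ

theorem lp.tendsto_norm_add_rpow_sub_norm_rpow {α β : Type*} {E : α → Type*}
    [∀ i, NormedAddCommGroup (E i)] {p : ℝ≥0∞} (hp : 0 < p.toReal) {l : Filter β}
    {x : β → lp E p} {C : ℝ} (hC : ∀ n, ‖x n‖ ≤ C) (hx : ∀ i, Tendsto (x · i) l (𝓝 0))
    (y : lp E p) :
    Tendsto (fun n => ‖x n + y‖ ^ p.toReal - ‖x n‖ ^ p.toReal) l (𝓝 (‖y‖ ^ p.toReal)) := by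
  set r := p.toReal
  have hsum (z : lp E p) : Summable fun i => ‖z i‖ ^ r := (lp.memℓp z).summable hp
  have hdefect : Tendsto (fun n => ∑' i, (‖x n i + y i‖ ^ r - ‖x n i‖ ^ r - ‖y i‖ ^ r)) l
      (𝓝 0) := by
    refine tendsto_tsum_of_abs_le_mul_add (g := fun n i => ‖x n i‖ ^ r) (B := C ^ r)
      (fun i => ?_) (fun n i => by positivity) (fun n => hsum (x n)) (fun n => ?_) (hsum y)
      (fun η hη => ?_)
    · have := (((hx i).add_const (y i)).norm.rpow_const (Or.inr hp.le)).sub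
        ((hx i).norm.rpow_const (Or.inr hp.le))
      simpa [Real.zero_rpow hp.ne'] using this.sub_const (‖y i‖ ^ r)
    · rw [← lp.norm_rpow_eq_tsum hp]
      exact Real.rpow_le_rpow (lp.norm_nonneg' _) (hC n) hp.le
    · obtain ⟨K, hK⟩ := exists_abs_rpow_sub_rpow_le hp.le hη
      refine ⟨K + 1, fun n i => ?_⟩
      have := hK _ _ _ (norm_nonneg (x n i)) (norm_nonneg (x n i + y i))
        (by simpa using abs_norm_sub_norm_le (x n i + y i) (x n i))
      have := abs_sub (‖x n i + y i‖ ^ r - ‖x n i‖ ^ r) (‖y i‖ ^ r)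
      rw [abs_of_nonneg (by positivity : (0 : ℝ) ≤ ‖y i‖ ^ r)] at this
      linarith
  have hnorm (n : β) : ∑' i, (‖x n i + y i‖ ^ r - ‖x n i‖ ^ r - ‖y i‖ ^ r) =
      ‖x n + y‖ ^ r - ‖x n‖ ^ r - ‖y‖ ^ r := by
    have hsum' := hsum (x n + y)
    simp only [lp.coeFn_add, Pi.add_apply] at hsum'
    rw [(hsum'.sub (hsum (x n))).tsum_sub (hsum y), hsum'.tsum_sub (hsum (x n)),
      lp.norm_rpow_eq_tsum hp, lp.norm_rpow_eq_tsum hp, lp.norm_rpow_eq_tsum hp, lp.coeFn_add]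
    rfl
  simpa [hnorm] using hdefect.add_const (‖y‖ ^ r)

theorem Filter.Tendsto.limsup_add {α : Type*} [ConditionallyCompleteLinearOrder α]
    [AddCommGroup α] [TopologicalSpace α] [OrderTopology α] [DenselyOrdered α] [AddLeftMono α]
    {β : Type*} {l : Filter β} [l.NeBot] {u v : β → α} {c : α} (hv : Tendsto v l (𝓝 c))
    (hu : IsBoundedUnder (· ≤ ·) l u) (hu' : IsBoundedUnder (· ≥ ·) l u) :
    limsup (fun n => u n + v n) l = limsup u l + c := by
  refine le_antisymm ?_ ?_
  · calc limsup (fun n => u n + v n) l ≤ limsup u l + limsup v l :=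
          limsup_add_le hu' hu hv.isBoundedUnder_ge.isCoboundedUnder_le hv.isBoundedUnder_le
      _ = limsup u l + c := by rw [hv.limsup_eq]
  · calc limsup u l + c = limsup u l + liminf v l := by rw [hv.liminf_eq]
      _ ≤ limsup (fun n => u n + v n) l :=
          le_limsup_add hu hu'.isCoboundedUnder_le hv.isBoundedUnder_le hv.isBoundedUnder_ge

theorem NormedSpace.exists_norm_le_of_forall_bddAbove_dual {𝕜 E ι : Type*} [RCLike 𝕜]
    [NormedAddCommGroup E] [NormedSpace 𝕜 E] {x : ι → E}
    (hx : ∀ f : StrongDual 𝕜 E, BddAbove (Set.range fun i => ‖f (x i)‖)) :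
    ∃ C, ∀ i, ‖x i‖ ≤ C := by
  obtain ⟨C, hC⟩ := banach_steinhaus (g := fun i => inclusionInDoubleDual 𝕜 E (x i))
    fun f => by simpa [bddAbove_def] using hx f
  exact ⟨C, fun i => (inclusionInDoubleDualLi 𝕜).norm_map (x i) ▸ hC i⟩

theorem stmt8_general (p : ℝ≥0∞) [Fact (1 ≤ p)] (hp' : p ≠ ⊤)
    (x : ℕ → lp (fun _ : ℕ => ℝ) p)
    (hweak : ∀ f : lp (fun _ : ℕ => ℝ) p →L[ℝ] ℝ,
      Tendsto (fun n => f (x n)) atTop (𝓝 0))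
    (y : lp (fun _ : ℕ => ℝ) p) :
    limsup (fun n => ‖x n + y‖ ^ p.toReal) atTop =
      limsup (fun n => ‖x n‖ ^ p.toReal) atTop + ‖y‖ ^ p.toReal := by
  have hp : 0 < p.toReal :=
    ENNReal.toReal_pos (zero_lt_one.trans_le Fact.out).ne' hp'
  obtain ⟨C, hC⟩ := NormedSpace.exists_norm_le_of_forall_bddAbove_dual (𝕜 := ℝ)
    fun f => (hweak f).norm.bddAbove_range
  have hcoord (i : ℕ) : Tendsto (x · i) atTop (𝓝 0) := hweak (lp.evalCLM ℝ _ p i)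
  have hdiff := lp.tendsto_norm_add_rpow_sub_norm_rpow hp hC hcoord y
  have hbdd : IsBoundedUnder (· ≤ ·) atTop fun n => ‖x n‖ ^ p.toReal :=
    isBoundedUnder_of ⟨C ^ p.toReal, fun n => by gcongr; exact hC n⟩
  have hbdd' : IsBoundedUnder (· ≥ ·) atTop fun n => ‖x n‖ ^ p.toReal :=
    isBoundedUnder_of ⟨0, fun n => by positivity⟩
  simpa only [add_sub_cancel] using hdiff.limsup_add hbdd hbdd'

theorem stmt8 (p : ℝ≥0∞) [Fact (1 ≤ p)] (hp : 1 < p) (hp' : p ≠ ⊤)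
    (x : ℕ → lp (fun _ : ℕ => ℝ) p)
    (hweak : ∀ f : lp (fun _ : ℕ => ℝ) p →L[ℝ] ℝ,
      Tendsto (fun n => f (x n)) atTop (𝓝 0))
    (y : lp (fun _ : ℕ => ℝ) p) :
    limsup (fun n => ‖x n + y‖ ^ p.toReal) atTop =
      limsup (fun n => ‖x n‖ ^ p.toReal) atTop + ‖y‖ ^ p.toReal :=
  stmt8_general p hp' x hweak y
end

section
/- For 1 < p < ∞ and b ∈ ℓ^∞, the essential norm of the multiplication operator M_b on ℓ^p equals limsupₙ |b(n)|, i.e., inf over compact operators K on ℓ^p of ‖M_b − K‖ = limsupₙ |b(n)|. -/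
/-!
A compact operator `K` maps the unit ball into a totally bounded set, and since `p < ∞` the
elements of a totally bounded subset of `ℓ^p` have uniformly small coordinates outside a finite
set. Testing `M - K` on the unit vector `eₙ` therefore gives `|b n| ≤ ‖M - K‖ + ε` for all but
finitely many `n`. Conversely, `M` composed with the projection onto the first `N` coordinates is
of finite rank, and subtracting it from `M` leaves multiplication by the tail of `b`, of norm at
most `sup_{n ≥ N} |b n|`.
-/

open Filter Topology
open scoped ENNReal lp

namespace lp

variable {α : Type*} {p : ℝ≥0∞} [Fact (1 ≤ p)]

theorem tendsto_norm_apply_cofinite {E : α → Type*} [∀ i, NormedAddCommGroup (E i)]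
    (hp : p ≠ ⊤) (f : lp E p) : Tendsto (fun i => ‖f i‖) cofinite (𝓝 0) := by
  classical
  have hp₀ : 0 < p := zero_lt_one.trans_le Fact.out
  simpa [lp.norm_single hp₀] using (lp.hasSum_single hp f).summable.tendsto_cofinite_zero.norm

theorem eventually_forall_norm_apply_le_of_totallyBounded {E : α → Type*}
    [∀ i, NormedAddCommGroup (E i)] (hp : p ≠ ⊤) {S : Set (lp E p)} (hS : TotallyBounded S)
    {ε : ℝ} (hε : 0 < ε) : ∀ᶠ i in cofinite, ∀ y ∈ S, ‖y i‖ ≤ ε := by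
  have hp₀ : p ≠ 0 := (zero_lt_one.trans_le Fact.out).ne'
  obtain ⟨t, ht, hSt⟩ := Metric.totallyBounded_iff.1 hS (ε / 2) (half_pos hε)
  have hnet : ∀ᶠ i in cofinite, ∀ z ∈ t, ‖z i‖ ≤ ε / 2 :=
    (eventually_all_finite ht).2 fun z _ =>
      (tendsto_norm_apply_cofinite hp z).eventually_le_const (half_pos hε)
  filter_upwards [hnet] with i hi y hy
  obtain ⟨z, hz, hyz⟩ := Set.mem_iUnion₂.1 (hSt hy)
  rw [Metric.mem_ball, dist_eq_norm] at hyz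
  calc ‖y i‖ = ‖(y - z) i + z i‖ := by rw [coeFn_sub, Pi.sub_apply, sub_add_cancel]
    _ ≤ ‖y - z‖ + ε / 2 := norm_add_le_of_le (norm_apply_le_norm hp₀ _ i) (hi z hz)
    _ ≤ ε := by linarith

theorem norm_le_mul_norm_of_forall_norm_apply_le {E F : α → Type*}
    [∀ i, NormedAddCommGroup (E i)] [∀ i, NormedAddCommGroup (F i)] {x : lp E p} {y : lp F p}
    {C : ℝ} (hC : 0 ≤ C) (h : ∀ i, ‖x i‖ ≤ C * ‖y i‖) : ‖x‖ ≤ C * ‖y‖ := by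
  have hp₀ : p ≠ 0 := (zero_lt_one.trans_le Fact.out).ne'
  calc ‖x‖ ≤ ‖C • toNorm y‖ := norm_mono hp₀ fun i => by
        simpa [Real.norm_of_nonneg hC, abs_of_nonneg hC] using h i
    _ = C * ‖y‖ := by rw [norm_smul, norm_toNorm, Real.norm_of_nonneg hC]

variable {𝕜 : Type*} [NormedField 𝕜] {E : α → Type*} [∀ i, NormedAddCommGroup (E i)]
  [∀ i, Module 𝕜 (E i)] [∀ i, IsBoundedSMul 𝕜 (E i)]

variable [DecidableEq α]

variable (𝕜) in
noncomputable def truncation (s : Finset α) : lp E p →L[𝕜] lp E p :=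
  ∑ i ∈ s, (singleContinuousLinearMap 𝕜 E p i).comp (evalCLM 𝕜 E p i)

theorem truncation_apply (s : Finset α) (x : lp E p) (i : α) :
    truncation 𝕜 s x i = if i ∈ s then x i else 0 := by
  have heval (j : α) : evalCLM 𝕜 E p j x = x j := rfl
  rw [truncation, sum_apply, coeFn_sum, Finset.sum_apply]
  simp [heval]

theorem isCompactOperator_truncation [∀ i, LocallyCompactSpace (E i)] (s : Finset α) :
    IsCompactOperator (truncation 𝕜 s : lp E p →L[𝕜] lp E p) := by
  refine Submodule.sum_mem (compactOperator (RingHom.id 𝕜) (lp E p) (lp E p)) fun i _ => ?_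
  exact (isCompactOperator_of_locallyCompactSpace_dom (evalCLM 𝕜 E p i)).clm_comp
    (singleContinuousLinearMap 𝕜 E p i)

end lp

section Multiplication

variable {α 𝕜 : Type*} [NontriviallyNormedField 𝕜] {p : ℝ≥0∞} [Fact (1 ≤ p)]
  {M : ℓ^p(α, 𝕜) →L[𝕜] ℓ^p(α, 𝕜)} {b : α → 𝕜}

theorem eventually_norm_le_opNorm_sub_add_of_isCompactOperator (hp : p ≠ ⊤)
    (hM : ∀ x i, M x i = b i * x i) {K : ℓ^p(α, 𝕜) →L[𝕜] ℓ^p(α, 𝕜)} (hK : IsCompactOperator K)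
    {ε : ℝ} (hε : 0 < ε) : ∀ᶠ i in cofinite, ‖b i‖ ≤ ‖M - K‖ + ε := by
  classical
  have hp₀ : 0 < p := zero_lt_one.trans_le Fact.out
  have hS : TotallyBounded (K '' Metric.closedBall 0 1) :=
    (hK.isCompact_closure_image_closedBall 1).totallyBounded.subset subset_closure
  filter_upwards [lp.eventually_forall_norm_apply_le_of_totallyBounded hp hS hε] with i hi
  set e : ℓ^p(α, 𝕜) := lp.single p i 1
  have he : ‖e‖ = 1 := by simp [e, lp.norm_single hp₀]
  have hKe : ‖K e i‖ ≤ ε := hi (K e) ⟨e, by simp [he], rfl⟩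
  calc ‖b i‖ = ‖(M - K) e i + K e i‖ := by simp [e, hM]
    _ ≤ ‖(M - K) e‖ + ε := norm_add_le_of_le (lp.norm_apply_le_norm hp₀.ne' _ i) hKe
    _ ≤ ‖M - K‖ + ε := by simpa [he] using add_le_add_right ((M - K).le_opNorm e) ε

theorem opNorm_sub_comp_truncation_le [DecidableEq α] (hM : ∀ x i, M x i = b i * x i)
    (s : Finset α) {C : ℝ} (hC : 0 ≤ C) (hb : ∀ i ∉ s, ‖b i‖ ≤ C) :
    ‖M - M.comp (lp.truncation 𝕜 s)‖ ≤ C := by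
  refine ContinuousLinearMap.opNorm_le_bound _ hC fun x =>
    lp.norm_le_mul_norm_of_forall_norm_apply_le hC fun i => ?_
  rw [sub_apply, ContinuousLinearMap.comp_apply, ← map_sub, hM,
    lp.coeFn_sub, Pi.sub_apply, lp.truncation_apply, norm_mul]
  split_ifs with hi
  · simp [mul_nonneg hC (norm_nonneg _)]
  · rw [sub_zero]
    exact mul_le_mul_of_nonneg_right (hb i hi) (norm_nonneg _)

end Multiplication

theorem stmt10_general (p : ℝ≥0∞) [Fact (1 ≤ p)] (hp' : p ≠ ⊤)
    (b : lp (fun _ : ℕ => ℝ) ∞)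
    (M : lp (fun _ : ℕ => ℝ) p →L[ℝ] lp (fun _ : ℕ => ℝ) p)
    (hM : ∀ (x : lp (fun _ : ℕ => ℝ) p) (n : ℕ), (M x : ℕ → ℝ) n = b n * x n) :
    sInf {c : ℝ | ∃ K : lp (fun _ : ℕ => ℝ) p →L[ℝ] lp (fun _ : ℕ => ℝ) p,
        IsCompactOperator K ∧ c = ‖M - K‖} =
      limsup (fun n => |b n|) atTop := by
  have hbdd : IsBoundedUnder (· ≤ ·) atTop fun n => |b n| :=
    isBoundedUnder_of ⟨‖b‖, fun n => lp.norm_apply_le_norm ENNReal.top_ne_zero b n⟩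
  refine csInf_eq_of_forall_ge_of_forall_gt_exists_lt ⟨_, 0, isCompactOperator_zero, rfl⟩ ?_ ?_
  · rintro _ ⟨K, hK, rfl⟩
    refine le_of_forall_pos_le_add fun ε hε =>
      limsup_le_of_le (isCoboundedUnder_le_of_le atTop fun n => abs_nonneg (b n)) ?_
    rw [← Nat.cofinite_eq_atTop]
    exact eventually_norm_le_opNorm_sub_add_of_isCompactOperator hp' hM hK hε
  · intro w hw
    obtain ⟨C, hLC, hCw⟩ := exists_between hw
    obtain ⟨N, hN⟩ := eventually_atTop.1 (eventually_lt_of_limsup_lt hLC hbdd)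
    have hb : ∀ n ∉ Finset.range N, ‖b n‖ ≤ C := fun n hn =>
      (hN n (by simpa using hn)).le
    have hC : 0 ≤ C := (norm_nonneg _).trans (hb N (by simp))
    exact ⟨_, ⟨M.comp (lp.truncation ℝ (Finset.range N)),
      (lp.isCompactOperator_truncation _).clm_comp M, rfl⟩,
      (opNorm_sub_comp_truncation_le hM _ hC hb).trans_lt hCw⟩

theorem stmt10 (p : ℝ≥0∞) [Fact (1 ≤ p)] (hp : 1 < p) (hp' : p ≠ ⊤)
    (b : lp (fun _ : ℕ => ℝ) ∞)
    (M : lp (fun _ : ℕ => ℝ) p →L[ℝ] lp (fun _ : ℕ => ℝ) p)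
    (hM : ∀ (x : lp (fun _ : ℕ => ℝ) p) (n : ℕ), (M x : ℕ → ℝ) n = b n * x n) :
    sInf {c : ℝ | ∃ K : lp (fun _ : ℕ => ℝ) p →L[ℝ] lp (fun _ : ℕ => ℝ) p,
        IsCompactOperator K ∧ c = ‖M - K‖} =
      limsup (fun n => |b n|) atTop :=
  stmt10_general p hp' b M hM
end

section
/- Let X be a reflexive Banach space with property (m_p), p > 1, and K a nonzero compact operator on X. Then every weak cluster point of every maximizing sequence for K has norm 1; that is, the minimal weak maximizing limit of K equals 1. -/
open Filter Topology

/-!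
A compact operator turns a weakly convergent bounded sequence into a norm convergent one, so along
a maximizing sequence `‖K x₀‖ = lim ‖K xₙ‖ = ‖K‖`; as `K ≠ 0` this forces `‖x₀‖ ≥ 1`. Conversely
the norm is weakly lower semicontinuous, so the weak limit of unit vectors has norm at most `1`.
-/

namespace WeakTendsto

variable {X Y : Type*} [NormedAddCommGroup X] [NormedSpace ℝ X]
  [NormedAddCommGroup Y] [NormedSpace ℝ Y]

theorem of_tendsto {x : ℕ → X} {x₀ : X} (h : Tendsto x atTop (𝓝 x₀)) : WeakTendsto x x₀ :=
  fun f => (f.continuous.tendsto x₀).comp h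

theorem comp_tendsto_s14 {x : ℕ → X} {x₀ : X} (h : WeakTendsto x x₀) {φ : ℕ → ℕ}
    (hφ : Tendsto φ atTop atTop) : WeakTendsto (x ∘ φ) x₀ :=
  fun f => (h f).comp hφ

theorem map_s14 {x : ℕ → X} {x₀ : X} (h : WeakTendsto x x₀) (T : X →L[ℝ] Y) :
    WeakTendsto (T ∘ x) (T x₀) :=
  fun f => h (f.comp T)

theorem unique {x : ℕ → X} {a b : X} (ha : WeakTendsto x a) (hb : WeakTendsto x b) : a = b :=
  (SeparatingDual.eq_iff_forall_dual_eq (R := ℝ)).2 fun f => tendsto_nhds_unique (ha f) (hb f)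

theorem norm_le_of_forall_norm_le {x : ℕ → X} {x₀ : X} (h : WeakTendsto x x₀) {C : ℝ}
    (hC : ∀ n, ‖x n‖ ≤ C) : ‖x₀‖ ≤ C := by
  obtain ⟨g, hg, hgx₀⟩ := exists_dual_vector'' ℝ x₀
  refine le_of_tendsto' (hgx₀ ▸ h g) fun n => ?_
  calc g (x n) ≤ ‖g‖ * ‖x n‖ := (le_abs_self _).trans (g.le_opNorm _)
    _ ≤ 1 * C := mul_le_mul hg (hC n) (norm_nonneg _) zero_le_one
    _ = C := one_mul C

end WeakTendsto

theorem IsCompactOperator.tendsto_of_weakTendsto {X Y : Type*} [NormedAddCommGroup X]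
    [NormedSpace ℝ X] [NormedAddCommGroup Y] [NormedSpace ℝ Y] {K : X →L[ℝ] Y}
    (hK : IsCompactOperator K) {x : ℕ → X} {x₀ : X} (hx : WeakTendsto x x₀) {r : ℝ}
    (hr : ∀ n, ‖x n‖ ≤ r) : Tendsto (fun n => K (x n)) atTop (𝓝 (K x₀)) := by
  obtain ⟨C, hC, hKC⟩ := hK.image_closedBall_subset_compact (f := (K : X →ₗ[ℝ] Y)) r
  have hmem : ∀ n, K (x n) ∈ C := fun n => hKC ⟨x n, mem_closedBall_zero_iff.2 (hr n), rfl⟩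
  refine tendsto_of_subseq_tendsto fun ψ hψ => ?_
  obtain ⟨y, -, φ, hφ, hy⟩ := hC.tendsto_subseq fun n => hmem (ψ n)
  have hy_eq : y = K x₀ :=
    (WeakTendsto.of_tendsto hy).unique ((hx.comp_tendsto_s14 (hψ.comp hφ.tendsto_atTop)).map_s14 K)
  exact ⟨φ, hy_eq ▸ hy⟩

theorem MaximizingSeq.norm_apply_eq_opNorm_of_weakTendsto {X : Type*} [NormedAddCommGroup X]
    [NormedSpace ℝ X] {K : X →L[ℝ] X}
    (hK : IsCompactOperator K) {x : ℕ → X} (hmax : MaximizingSeq K x) {φ : ℕ → ℕ}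
    (hφ : StrictMono φ) {x₀ : X} (hx₀ : WeakTendsto (x ∘ φ) x₀) : ‖K x₀‖ = ‖K‖ := by
  have hKx := hK.tendsto_of_weakTendsto hx₀ fun n => (hmax.1 (φ n)).le
  exact tendsto_nhds_unique hKx.norm (hmax.2.comp hφ.tendsto_atTop)

theorem stmt14_general {X : Type*} [NormedAddCommGroup X] [NormedSpace ℝ X]
    (K : X →L[ℝ] X) (hK : IsCompactOperator K) (hK0 : K ≠ 0) :
    ∀ x₀ : X, WeakClusterPtOfMaximizing K x₀ → ‖x₀‖ = 1 := by
  rintro x₀ ⟨x, hmax, φ, hφ, hx₀⟩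
  have hle : ‖x₀‖ ≤ 1 := hx₀.norm_le_of_forall_norm_le fun n => (hmax.1 (φ n)).le
  have hKx₀ := MaximizingSeq.norm_apply_eq_opNorm_of_weakTendsto hK hmax hφ hx₀
  have hge : ‖K‖ * 1 ≤ ‖K‖ * ‖x₀‖ :=
    calc ‖K‖ * 1 = ‖K x₀‖ := by rw [mul_one, hKx₀]
      _ ≤ ‖K‖ * ‖x₀‖ := K.le_opNorm x₀
  exact hle.antisymm (le_of_mul_le_mul_left hge (norm_pos_iff.2 hK0))

theorem stmt14 {X : Type*} [NormedAddCommGroup X] [NormedSpace ℝ X] [CompleteSpace X]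
    (hrefl : Function.Surjective (NormedSpace.inclusionInDoubleDual ℝ X))
    {p : ℝ} (hp : 1 < p) (hmp : PropertyMp (X := X) p)
    (K : X →L[ℝ] X) (hK : IsCompactOperator K) (hK0 : K ≠ 0) :
    ∀ x₀ : X, WeakClusterPtOfMaximizing K x₀ → ‖x₀‖ = 1 :=
  stmt14_general K hK hK0
end
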